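/- For every integer d ≥ 1 there exists a constant S(d) > 0 such that for every integer ℓ ≥ 1 and every function f : ℤ^d → ℝ: max_{x ∈ B_ℓ} |f(x)| ≤ S(d) · ℓ^{−d/2} · Σ_{α ∈ ℕ₀^d, |α| ≤ M'} ( Σ_{x ∈ B_ℓ} ℓ^{2|α|} |∇^α f(x)|² )^{1/2}, where B_ℓ := {0,1,…,ℓ}^d, M' := ⌊d/2⌋ + 1, and |α| = α_1 + ⋯ + α_d. -/

import Mathlib

open scoped BigOperators

/-- Forward difference in direction `e_i` on `ℤ^d`. -/
def fd1 {d : ℕ} (i : Fin d) (f : (Fin d → ℤ) → ℝ) : (Fin d → ℤ) → ℝ :=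
  fun x => f (x + Pi.single i 1) - f x

/-- Iterated forward difference in one direction. -/
def fdPow {d : ℕ} (i : Fin d) : ℕ → ((Fin d → ℤ) → ℝ) → (Fin d → ℤ) → ℝ
  | 0, f => f
  | k + 1, f => fd1 i (fdPow i k f)

/-- Multiindex forward difference `∇^α = ∇₁^{α₁} ⋯ ∇_d^{α_d}`. -/
def fdMulti {d : ℕ} (α : Fin d → ℕ) (f : (Fin d → ℤ) → ℝ) : (Fin d → ℤ) → ℝ :=
  (List.finRange d).foldr (fun i g => fdPow i (α i) g) f

/-!
For `x ∈ B_ℓ` let `Q_r` be the cube of side `r` inside `B_ℓ` that contains `x`, and average over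
`y ∈ Q_r` the Newton (forward-difference Taylor) polynomials of `f` of order `m = ⌊d/2⌋` based at
`y` and evaluated at `x`. For `r = 0` the average is `f x`; for `r = ℓ` Cauchy–Schwarz bounds it by
the derivatives of order `≤ m`. By Newton's formula and Pascal's rule, moving the base point by a
unit step changes the polynomial only by derivatives of order `m + 1`; joining the points of two
nested cubes by coordinate paths, the averages at consecutive dyadic scales `r = ℓ / 2 ^ j`
therefore differ by `O(r ^ (m + 1 - d/2))` times the `L²` norms of those derivatives. As
`m + 1 > d/2`, these differences form a geometric series dominated by its term at `r = ℓ`.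
-/

open Finset

theorem Int.abs_choose_le (t : ℤ) (k : ℕ) : |Ring.choose t k| ≤ (|t| + k) ^ k := by
  have hfac : (k.factorial : ℤ) * Ring.choose t k = ∏ i ∈ Finset.range k, (t - i) := by
    rw [← nsmul_eq_mul, ← Ring.descPochhammer_eq_factorial_smul_choose,
      ← descPochhammer_eval_eq_prod_range, Polynomial.eval_eq_smeval]
  calc |Ring.choose t k| ≤ |(k.factorial : ℤ) * Ring.choose t k| := by
        rw [abs_mul]
        exact le_mul_of_one_le_left (abs_nonneg _) (by exact_mod_cast k.factorial_pos)
    _ = ∏ i ∈ Finset.range k, |t - i| := by rw [hfac, abs_prod]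
    _ ≤ ∏ _i ∈ Finset.range k, (|t| + k) := by
        refine prod_le_prod (fun _ _ => abs_nonneg _) fun i hi => (abs_sub _ _).trans ?_
        have := mem_range.mp hi
        rw [Nat.abs_cast]
        omega
    _ = (|t| + k) ^ k := by rw [prod_const, card_range]

section Differences

variable {d : ℕ}

theorem fd1_comm (i j : Fin d) (f : (Fin d → ℤ) → ℝ) : fd1 i (fd1 j f) = fd1 j (fd1 i f) := by
  funext x
  simp only [fd1, add_right_comm x (Pi.single i 1)]
  ring

theorem fd1_fdPow_comm (i j : Fin d) (k : ℕ) (f : (Fin d → ℤ) → ℝ) :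
    fd1 j (fdPow i k f) = fdPow i k (fd1 j f) := by
  induction k with
  | zero => rfl
  | succ k ih => rw [fdPow, fdPow, ← ih, fd1_comm]

theorem fdPow_comm (i j : Fin d) (a b : ℕ) (f : (Fin d → ℤ) → ℝ) :
    fdPow i a (fdPow j b f) = fdPow j b (fdPow i a f) := by
  induction a with
  | zero => rfl
  | succ a ih => rw [fdPow, fdPow, ih, fd1_fdPow_comm]

theorem fdPow_apply_add_single (i : Fin d) (k : ℕ) (f : (Fin d → ℤ) → ℝ) (y : Fin d → ℤ) :
    fdPow i k f (y + Pi.single i 1) = fdPow i k f y + fdPow i (k + 1) f y := by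
  rw [fdPow, fd1]
  ring

theorem fdMulti_zero (f : (Fin d → ℤ) → ℝ) : fdMulti 0 f = f := by
  rw [fdMulti]
  induction List.finRange d with
  | nil => rfl
  | cons a T ih => rw [List.foldr_cons, ih]; rfl

theorem foldr_fdPow_update_of_notMem {L : List (Fin d)} {i : Fin d} (hi : i ∉ L)
    (γ : Fin d → ℕ) (k : ℕ) (f : (Fin d → ℤ) → ℝ) :
    L.foldr (fun j g => fdPow j (Function.update γ i k j) g) f =
      L.foldr (fun j g => fdPow j (γ j) g) f := by
  induction L with
  | nil => rfl
  | cons a T ih =>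
    rw [List.mem_cons, not_or] at hi
    rw [List.foldr_cons, List.foldr_cons, Function.update_of_ne (Ne.symm hi.1), ih hi.2]

theorem foldr_fdPow_update {L : List (Fin d)} (hL : L.Nodup) {i : Fin d} (hi : i ∈ L)
    {γ : Fin d → ℕ} (hγ : γ i = 0) (k : ℕ) (f : (Fin d → ℤ) → ℝ) :
    L.foldr (fun j g => fdPow j (Function.update γ i k j) g) f =
      fdPow i k (L.foldr (fun j g => fdPow j (γ j) g) f) := by
  induction L with
  | nil => simp at hi
  | cons a T ih =>
    obtain ⟨haT, hT⟩ := List.nodup_cons.mp hL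
    rw [List.foldr_cons, List.foldr_cons]
    by_cases hia : a = i
    · subst hia
      rw [Function.update_self, hγ, foldr_fdPow_update_of_notMem haT]
      rfl
    · rw [Function.update_of_ne hia, ih hT ((List.mem_cons.mp hi).resolve_left (Ne.symm hia)),
        fdPow_comm]

theorem fdMulti_update {i : Fin d} {γ : Fin d → ℕ} (hγ : γ i = 0) (k : ℕ)
    (f : (Fin d → ℤ) → ℝ) :
    fdMulti (Function.update γ i k) f = fdPow i k (fdMulti γ f) :=
  foldr_fdPow_update (List.nodup_finRange d) (List.mem_finRange i) hγ k f

end Differences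

section Taylor

variable {d : ℕ}

def multiIndicesLE (d m : ℕ) : Finset (Fin d → ℕ) :=
  (Iic fun _ => m).filter fun γ => ∑ i, γ i ≤ m

theorem mem_multiIndicesLE {m : ℕ} {γ : Fin d → ℕ} :
    γ ∈ multiIndicesLE d m ↔ ∑ i, γ i ≤ m := by
  refine ⟨fun h => (mem_filter.mp h).2, fun h => mem_filter.mpr ⟨mem_Iic.mpr fun i => ?_, h⟩⟩
  exact (single_le_sum (fun _ _ => Nat.zero_le _) (mem_univ i)).trans h

theorem sum_update_of_eq_zero {γ : Fin d → ℕ} {k : Fin d} (hγ : γ k = 0) (j : ℕ) :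
    ∑ i, Function.update γ k j i = j + ∑ i, γ i := by
  rw [sum_update_of_mem (mem_univ k), sum_eq_sum_sdiff_singleton_add (mem_univ k) γ, hγ,
    add_zero]

theorem sum_multiIndicesLE_eq_sum_update (m : ℕ) (k : Fin d) (F : (Fin d → ℕ) → ℝ) :
    ∑ γ ∈ multiIndicesLE d m, F γ =
      ∑ γ ∈ (multiIndicesLE d m).filter (· k = 0),
        ∑ j ∈ range (m + 1 - ∑ i, γ i), F (Function.update γ k j) := by
  classical
  rw [sum_sigma']
  refine sum_nbij' (fun γ => ⟨Function.update γ k 0, γ k⟩) (fun p => Function.update p.1 k p.2)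
    ?_ ?_ ?_ ?_ ?_
  · intro γ hγ
    have hsum := sum_update_of_eq_zero (γ := Function.update γ k 0) (k := k)
      (Function.update_self k 0 γ) (γ k)
    rw [Function.update_idem, Function.update_eq_self] at hsum
    have hγm := mem_multiIndicesLE.mp hγ
    simp only [mem_sigma, mem_filter, mem_range, mem_multiIndicesLE, Function.update_self, and_true]
    omega
  · rintro ⟨γ, j⟩ hp
    simp only [mem_sigma, mem_filter, mem_range, mem_multiIndicesLE] at hp
    simp only [mem_multiIndicesLE, sum_update_of_eq_zero hp.1.2]
    omega
  · intro γ _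
    simp
  · rintro ⟨γ, j⟩ hp
    simp only [mem_sigma, mem_filter] at hp
    simp [hp.1.2]
  · intro γ _
    simp

noncomputable def multiBinom (t : Fin d → ℤ) (γ : Fin d → ℕ) : ℝ :=
  ∏ i, ((Ring.choose (t i) (γ i) : ℤ) : ℝ)

theorem multiBinom_update (t : Fin d → ℤ) {γ : Fin d → ℕ} {k : Fin d} (hγ : γ k = 0)
    (j : ℕ) :
    multiBinom t (Function.update γ k j) = (Ring.choose (t k) j : ℤ) * multiBinom t γ := by
  classical
  have h : ∀ i, ((Ring.choose (t i) (Function.update γ k j i) : ℤ) : ℝ) =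
      Function.update (fun i => ((Ring.choose (t i) (γ i) : ℤ) : ℝ)) k
        ((Ring.choose (t k) j : ℤ) : ℝ) i := by
    intro i
    rcases eq_or_ne i k with rfl | hik <;> simp [*]
  rw [multiBinom, multiBinom, Finset.prod_congr rfl fun i _ => h i,
    prod_update_of_mem (mem_univ k), ← mul_prod_erase univ _ (mem_univ k), hγ,
    Ring.choose_zero_right, Int.cast_one, one_mul, sdiff_singleton_eq_erase]

theorem multiBinom_congr {t s : Fin d → ℤ} {γ : Fin d → ℕ} {k : Fin d} (hγ : γ k = 0)
    (h : ∀ i, i ≠ k → t i = s i) : multiBinom t γ = multiBinom s γ := by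
  refine prod_congr rfl fun i _ => ?_
  rcases eq_or_ne i k with rfl | hik
  · rw [hγ, Ring.choose_zero_right, Ring.choose_zero_right]
  · rw [h i hik]

theorem multiBinom_zero_left {γ : Fin d → ℕ} (hγ : γ ≠ 0) : multiBinom 0 γ = 0 := by
  obtain ⟨i, hi⟩ := Function.ne_iff.mp hγ
  refine prod_eq_zero (mem_univ i) ?_
  rw [Pi.zero_apply, Ring.choose_zero_pos ℤ (Nat.pos_of_ne_zero hi), Int.cast_zero]

theorem abs_multiBinom_le {t : Fin d → ℤ} {R m : ℕ} (ht : ∀ i, |t i| ≤ R) {γ : Fin d → ℕ}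
    (hγ : ∑ i, γ i ≤ m) : |multiBinom t γ| ≤ ((R : ℝ) + m) ^ ∑ i, γ i := by
  rw [multiBinom, abs_prod, ← prod_pow_eq_pow_sum]
  refine prod_le_prod (fun _ _ => abs_nonneg _) fun i _ => ?_
  have hγi : γ i ≤ m := (single_le_sum (fun _ _ => Nat.zero_le _) (mem_univ i)).trans hγ
  have h := Int.abs_choose_le (t i) (γ i)
  have h' : |t i| + γ i ≤ R + m := by have := ht i; omega
  rw [← Int.cast_abs]
  calc ((|Ring.choose (t i) (γ i)| : ℤ) : ℝ) ≤ (((|t i| + γ i) ^ γ i : ℤ) : ℝ) := by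
        exact_mod_cast h
    _ ≤ ((R : ℝ) + m) ^ γ i := by
        push_cast
        exact pow_le_pow_left₀ (by positivity) (by exact_mod_cast h') _

/-- Newton's forward-difference formula of order `m` for `f` around `y`, evaluated at `x`. -/
noncomputable def discreteTaylor (m : ℕ) (f : (Fin d → ℤ) → ℝ) (x y : Fin d → ℤ) : ℝ :=
  ∑ γ ∈ multiIndicesLE d m, multiBinom (x - y) γ * fdMulti γ f y

theorem discreteTaylor_self (m : ℕ) (f : (Fin d → ℤ) → ℝ) (x : Fin d → ℤ) :
    discreteTaylor m f x x = f x := by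
  rw [discreteTaylor, sum_eq_single (0 : Fin d → ℕ)]
  · simp [multiBinom, fdMulti_zero]
  · intro γ _ hγ
    rw [sub_self, multiBinom_zero_left hγ, zero_mul]
  · exact fun h => absurd (mem_multiIndicesLE.mpr (by simp)) h

theorem sum_choose_mul_fdPow_add_single_sub (i : Fin d) (g : (Fin d → ℤ) → ℝ) (y : Fin d → ℤ)
    (t : ℤ) (m : ℕ) :
    ∑ k ∈ range (m + 1), ((Ring.choose (t - 1) k : ℤ) : ℝ) * fdPow i k g (y + Pi.single i 1) -
        ∑ k ∈ range (m + 1), ((Ring.choose t k : ℤ) : ℝ) * fdPow i k g y =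
      ((Ring.choose (t - 1) m : ℤ) : ℝ) * fdPow i (m + 1) g y := by
  induction m with
  | zero => simp [fdPow_apply_add_single]
  | succ m ih =>
    have pascal : Ring.choose t (m + 1) = Ring.choose (t - 1) m + Ring.choose (t - 1) (m + 1) := by
      simpa using Ring.choose_succ_succ (t - 1) m
    rw [sum_range_succ, sum_range_succ (fun k => ((Ring.choose t k : ℤ) : ℝ) * fdPow i k g y),
      fdPow_apply_add_single, pascal]
    push_cast
    linear_combination ih

theorem discreteTaylor_add_single_sub (m : ℕ) (f : (Fin d → ℤ) → ℝ) (x y : Fin d → ℤ)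
    (k : Fin d) :
    discreteTaylor m f x (y + Pi.single k 1) - discreteTaylor m f x y =
      ∑ γ ∈ (multiIndicesLE d m).filter (· k = 0),
        multiBinom (x - (y + Pi.single k 1)) (Function.update γ k (m - ∑ i, γ i)) *
          fdMulti (Function.update γ k (m + 1 - ∑ i, γ i)) f y := by
  classical
  rw [discreteTaylor, discreteTaylor, sum_multiIndicesLE_eq_sum_update m k,
    sum_multiIndicesLE_eq_sum_update m k (fun γ => multiBinom (x - y) γ * fdMulti γ f y),
    ← sum_sub_distrib]
  refine sum_congr rfl fun γ hγ => ?_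
  obtain ⟨hγm, hγk⟩ := mem_filter.mp hγ
  have hm := mem_multiIndicesLE.mp hγm
  set y' := y + Pi.single k 1
  have hy'_ne : ∀ i, i ≠ k → (x - y') i = (x - y) i := fun i hi => by simp [y', hi]
  have hy'_k : (x - y') k = (x - y) k - 1 := by simp [y']; ring
  simp only [multiBinom_update _ hγk, fdMulti_update hγk, multiBinom_congr hγk hy'_ne, hy'_k,
    mul_right_comm _ (multiBinom (x - y) γ), ← sum_mul, ← sub_mul]
  rw [show m + 1 - ∑ i, γ i = m - ∑ i, γ i + 1 by omega,
    sum_choose_mul_fdPow_add_single_sub]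

theorem abs_discreteTaylor_add_single_sub_le {m r : ℕ} (f : (Fin d → ℤ) → ℝ)
    {x p : Fin d → ℤ} (hxp : ∀ i, |x i - p i| ≤ r) (k : Fin d) :
    |discreteTaylor m f x (p + Pi.single k 1) - discreteTaylor m f x p| ≤
      (((m : ℝ) + 1) * (r + 1)) ^ m * ∑ γ ∈ (multiIndicesLE d m).filter (· k = 0),
        |fdMulti (Function.update γ k (m + 1 - ∑ i, γ i)) f p| := by
  rw [discreteTaylor_add_single_sub, mul_sum]
  refine (abs_sum_le_sum_abs _ _).trans (sum_le_sum fun γ hγ => ?_)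
  obtain ⟨hγm, hγk⟩ := mem_filter.mp hγ
  have hm := mem_multiIndicesLE.mp hγm
  have hsum : ∑ i, Function.update γ k (m - ∑ i, γ i) i = m := by
    rw [sum_update_of_eq_zero hγk]; omega
  have hdist : ∀ i, |(x - (p + Pi.single k 1) : Fin d → ℤ) i| ≤ ((r + 1 : ℕ) : ℤ) := by
    intro i
    have := abs_le.mp (hxp i)
    rw [abs_le]
    rcases eq_or_ne i k with rfl | hik
    · simp only [Pi.sub_apply, Pi.add_apply, Pi.single_eq_same]; omega
    · simp only [Pi.sub_apply, Pi.add_apply, Pi.single_eq_of_ne hik]; omega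
  rw [abs_mul]
  gcongr
  calc _ ≤ (((r + 1 : ℕ) : ℝ) + m) ^ m := (abs_multiBinom_le hdist hsum.le).trans_eq (by rw [hsum])
    _ ≤ (((m : ℝ) + 1) * (r + 1)) ^ m := by
        gcongr
        push_cast
        nlinarith [(r.cast_nonneg : (0 : ℝ) ≤ r), (m.cast_nonneg : (0 : ℝ) ≤ m)]

end Taylor

theorem abs_sub_le_sum_Icc_abs_sub (G : ℤ → ℝ) {lo hi a b : ℤ} (ha : a ∈ Icc lo hi)
    (hb : b ∈ Icc lo hi) : |G b - G a| ≤ ∑ s ∈ Icc lo hi, |G (s + 1) - G s| := by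
  wlog hab : a ≤ b generalizing a b
  · rw [abs_sub_comm]; exact this hb ha (le_of_not_ge hab)
  have htele : G b - G a = ∑ s ∈ Ico a b, (G (s + 1) - G s) := by
    induction b, hab using Int.leInduction with
    | base => simp
    | succ n hn ih =>
      have : Ico a (n + 1) = insert n (Ico a n) := by ext; simp; omega
      rw [this, sum_insert (by simp), ← ih (by simp only [mem_Icc] at ha hb ⊢; omega)]
      ring
  rw [htele]
  refine (abs_sum_le_sum_abs _ _).trans
    (sum_le_sum_of_subset_of_nonneg ?_ fun _ _ _ => abs_nonneg _)
  intro s hs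
  simp only [mem_Ico, mem_Icc] at ha hb hs ⊢
  omega

theorem abs_expect_sub_expect_le {ι κ : Type*} {s : Finset ι} {t : Finset κ} (hs : s.Nonempty)
    (ht : t.Nonempty) (F : ι → ℝ) (G : κ → ℝ) :
    |𝔼 i ∈ s, F i - 𝔼 j ∈ t, G j| ≤ (#s * #t : ℝ)⁻¹ * ∑ i ∈ s, ∑ j ∈ t, |F i - G j| := by
  have h : 𝔼 i ∈ s, F i - 𝔼 j ∈ t, G j = (#s * #t : ℝ)⁻¹ * ∑ i ∈ s, ∑ j ∈ t, (F i - G j) := by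
    simp only [expect_eq_sum_div_card, sum_sub_distrib, sum_const, nsmul_eq_mul]
    field_simp
    rw [← mul_sum]
    ring
  rw [h, abs_mul, abs_of_nonneg (by positivity)]
  gcongr
  exact (abs_sum_le_sum_abs _ _).trans (sum_le_sum fun i _ => abs_sum_le_sum_abs _ _)

theorem sum_abs_le_sqrt_card_mul_sqrt {ι : Type*} (s : Finset ι) (g : ι → ℝ) :
    ∑ i ∈ s, |g i| ≤ √(#s) * √(∑ i ∈ s, g i ^ 2) := by
  rw [← Real.sqrt_mul (Nat.cast_nonneg _)]
  refine Real.le_sqrt_of_sq_le ?_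
  simpa [sq_abs] using sum_mul_sq_le_sq_mul_sq s (fun _ => (1 : ℝ)) fun i => |g i|

theorem pow_div_sqrt_pow_eq_rpow {s : ℝ} (hs : 0 < s) (n d : ℕ) :
    s ^ n / √(s ^ d) = s ^ ((n : ℝ) - d / 2) := by
  rw [Real.sqrt_eq_rpow, ← Real.rpow_natCast, ← Real.rpow_natCast s d, ← Real.rpow_mul hs.le,
    ← Real.rpow_sub hs]
  ring_nf

theorem Int.card_Icc_add_natCast (a : ℤ) (r : ℕ) : #(Icc a (a + r)) = r + 1 := by
  rw [Int.card_Icc, show a + r + 1 - a = ((r + 1 : ℕ) : ℤ) by push_cast; ring, Int.toNat_natCast]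

section Cubes

variable {d : ℕ}

noncomputable def cube (a : Fin d → ℤ) (r : ℕ) : Finset (Fin d → ℤ) := Icc a fun i => a i + r

theorem mem_cube {a y : Fin d → ℤ} {r : ℕ} : y ∈ cube a r ↔ ∀ i, a i ≤ y i ∧ y i ≤ a i + r := by
  simp only [cube, mem_Icc, Pi.le_def, forall_and]

theorem card_cube (a : Fin d → ℤ) (r : ℕ) : #(cube a r) = (r + 1) ^ d := by
  simp only [cube, Pi.card_Icc, Int.card_Icc_add_natCast, prod_const, card_univ, Fintype.card_fin]

theorem cube_nonempty (a : Fin d → ℤ) (r : ℕ) : (cube a r).Nonempty :=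
  card_pos.mp (by rw [card_cube]; positivity)

theorem cube_zero_right (a : Fin d → ℤ) : cube a 0 = {a} := by
  ext y
  simp only [mem_cube, Nat.cast_zero, add_zero, mem_singleton, funext_iff, ← le_antisymm_iff]
  exact forall_congr' fun _ => eq_comm

noncomputable def boxNorm (ℓ : ℕ) (h : (Fin d → ℤ) → ℝ) : ℝ := √(∑ z ∈ cube 0 ℓ, h z ^ 2)

/-- The corner of the cube of side `r ≤ ℓ` that contains `x` and lies in `B_ℓ = cube 0 ℓ`. -/
def subcubeCorner (x : Fin d → ℤ) (ℓ r : ℕ) : Fin d → ℤ := fun i => min (x i) (ℓ - r)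

theorem mem_subcube_self {x : Fin d → ℤ} {ℓ r : ℕ} (hx : x ∈ cube 0 ℓ) :
    x ∈ cube (subcubeCorner x ℓ r) r := by
  simp only [mem_cube, subcubeCorner, Pi.zero_apply, zero_add] at hx ⊢
  intro i
  have := hx i
  omega

theorem subcube_subset {x : Fin d → ℤ} {ℓ r : ℕ} (hx : x ∈ cube 0 ℓ) (hr : r ≤ ℓ) :
    cube (subcubeCorner x ℓ r) r ⊆ cube 0 ℓ := by
  intro y hy
  simp only [mem_cube, subcubeCorner, Pi.zero_apply, zero_add] at hx hy ⊢
  intro i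
  have := hx i
  have := hy i
  omega

theorem subcube_mono {x : Fin d → ℤ} {ℓ r r' : ℕ} (h : r' ≤ r) :
    cube (subcubeCorner x ℓ r') r' ⊆ cube (subcubeCorner x ℓ r) r := by
  intro y hy
  simp only [mem_cube, subcubeCorner] at hy ⊢
  intro i
  have := hy i
  omega

theorem subcube_zero {x : Fin d → ℤ} {ℓ : ℕ} (hx : x ∈ cube 0 ℓ) :
    cube (subcubeCorner x ℓ 0) 0 = {x} := by
  rw [cube_zero_right]
  congr 1
  funext i
  have := (mem_cube.mp hx i).2
  simp only [subcubeCorner, Nat.cast_zero, sub_zero, Pi.zero_apply, zero_add] at this ⊢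
  omega

theorem subcube_self {x : Fin d → ℤ} {ℓ : ℕ} (hx : x ∈ cube 0 ℓ) :
    cube (subcubeCorner x ℓ ℓ) ℓ = cube 0 ℓ := by
  congr 1
  funext i
  have := (mem_cube.mp hx i).1
  simp only [subcubeCorner, sub_self, Pi.zero_apply] at this ⊢
  omega

end Cubes

section Paths

variable {d : ℕ}

def pathPoint (n : Fin d) (y y' : Fin d → ℤ) (s : ℤ) : Fin d → ℤ :=
  fun j => if j < n then y j else if j = n then s else y' j

theorem pathPoint_add_one (n : Fin d) (y y' : Fin d → ℤ) (s : ℤ) :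
    pathPoint n y y' (s + 1) = pathPoint n y y' s + Pi.single n 1 := by
  funext j
  simp only [pathPoint, Pi.add_apply, Pi.single_apply]
  split_ifs <;> simp_all

theorem pathPoint_mem_cube {a y y' : Fin d → ℤ} {r : ℕ} (hy : y ∈ cube a r) (hy' : y' ∈ cube a r)
    {n : Fin d} {s : ℤ} (hs : s ∈ Icc (a n) (a n + r)) : pathPoint n y y' s ∈ cube a r := by
  refine mem_cube.mpr fun j => ?_
  unfold pathPoint
  split_ifs with h₁ h₂
  · exact mem_cube.mp hy j
  · exact h₂ ▸ mem_Icc.mp hs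
  · exact mem_cube.mp hy' j

theorem abs_sub_le_sum_pathPoint (T : (Fin d → ℤ) → ℝ) {a y y' : Fin d → ℤ} {r : ℕ}
    (hy : y ∈ cube a r) (hy' : y' ∈ cube a r) :
    |T y - T y'| ≤ ∑ n, ∑ s ∈ Icc (a n) (a n + r),
      |T (pathPoint n y y' s + Pi.single n 1) - T (pathPoint n y y' s)| := by
  set mix : ℕ → Fin d → ℤ := fun t j => if (j : ℕ) < t then y j else y' j
  have hstep : ∀ n : Fin d,
      mix (n + 1) = pathPoint n y y' (y n) ∧ mix n = pathPoint n y y' (y' n) := by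
    intro n
    constructor
    · funext j
      rcases eq_or_ne j n with rfl | hjn
      · simp [mix, pathPoint]
      · have := Fin.val_ne_iff.mpr hjn
        simp only [mix, pathPoint, Fin.lt_def, hjn, if_false]
        split_ifs <;> first | rfl | omega
    · funext j
      rcases eq_or_ne j n with rfl | hjn
      · simp [mix, pathPoint]
      · simp only [mix, pathPoint, Fin.lt_def, hjn, if_false]
  have htele : T y - T y' = ∑ n : Fin d, (T (mix (n + 1)) - T (mix n)) := by
    rw [Fin.sum_univ_eq_sum_range (fun t => T (mix (t + 1)) - T (mix t)),
      sum_range_sub (fun t => T (mix t)), show mix d = y from funext fun j => by simp [mix],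
      show mix 0 = y' from funext fun j => by simp [mix]]
  rw [htele]
  refine (abs_sum_le_sum_abs _ _).trans (sum_le_sum fun n _ => ?_)
  rw [(hstep n).1, (hstep n).2]
  simp only [← pathPoint_add_one]
  have hcoord : ∀ z ∈ cube a r, z n ∈ Icc (a n) (a n + r) := fun z hz =>
    mem_Icc.mpr (mem_cube.mp hz n)
  exact abs_sub_le_sum_Icc_abs_sub (fun s => T (pathPoint n y y' s)) (hcoord y' hy') (hcoord y hy)

theorem pathPoint_pair_injective (n : Fin d) :
    Function.Injective fun w : ((Fin d → ℤ) × (Fin d → ℤ)) × ℤ =>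
      ((pathPoint n w.1.1 w.1.2 w.2, pathPoint n w.1.2 w.1.1 (w.1.1 n)), w.1.2 n) := by
  rintro ⟨⟨y, y'⟩, s⟩ ⟨⟨u, u'⟩, t⟩ h
  simp only [Prod.mk.injEq] at h
  obtain ⟨⟨h₁, h₂⟩, h₃⟩ := h
  have e₁ := congrFun h₁
  have e₂ := congrFun h₂
  have hs : s = t := by simpa [pathPoint] using e₁ n
  have hyn : y n = u n := by simpa [pathPoint] using e₂ n
  simp only [Prod.mk.injEq, hs, and_true]
  constructor <;> funext j <;> rcases lt_trichotomy j n with h | rfl | h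
  · simpa [pathPoint, h] using e₁ j
  · exact hyn
  · simpa [pathPoint, h.ne', not_lt_of_gt h] using e₂ j
  · simpa [pathPoint, h] using e₂ j
  · exact h₃
  · simpa [pathPoint, h.ne', not_lt_of_gt h] using e₁ j

/-- Each point of the cube is visited at most `(r + 1) ^ (d + 1)` times, by
`pathPoint_pair_injective`. -/
theorem sum_pathPoint_le {a : Fin d → ℤ} {r : ℕ} {Q' : Finset (Fin d → ℤ)}
    (hQ' : Q' ⊆ cube a r) (n : Fin d) {g : (Fin d → ℤ) → ℝ} (hg : ∀ z, 0 ≤ g z) :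
    ∑ y ∈ cube a r, ∑ y' ∈ Q', ∑ s ∈ Icc (a n) (a n + r), g (pathPoint n y y' s) ≤
      ((r : ℝ) + 1) ^ (d + 1) * ∑ z ∈ cube a r, g z := by
  classical
  set Q := cube a r
  set I := Icc (a n) (a n + r)
  set φ : ((Fin d → ℤ) × (Fin d → ℤ)) × ℤ → ((Fin d → ℤ) × (Fin d → ℤ)) × ℤ :=
    fun w => ((pathPoint n w.1.1 w.1.2 w.2, pathPoint n w.1.2 w.1.1 (w.1.1 n)), w.1.2 n)
  have hmaps : ∀ w ∈ (Q ×ˢ Q') ×ˢ I, φ w ∈ (Q ×ˢ Q) ×ˢ I := by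
    rintro ⟨⟨y, y'⟩, s⟩ hw
    simp only [mem_product] at hw ⊢
    obtain ⟨⟨hy, hy'⟩, hs⟩ := hw
    have hy'Q := hQ' hy'
    exact ⟨⟨pathPoint_mem_cube hy hy'Q hs, pathPoint_mem_cube hy'Q hy (mem_Icc.mpr
      (mem_cube.mp hy n))⟩, mem_Icc.mpr (mem_cube.mp hy'Q n)⟩
  calc ∑ y ∈ Q, ∑ y' ∈ Q', ∑ s ∈ I, g (pathPoint n y y' s)
      = ∑ w ∈ (Q ×ˢ Q') ×ˢ I, g (φ w).1.1 := by rw [sum_product, sum_product]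
    _ = ∑ u ∈ ((Q ×ˢ Q') ×ˢ I).image φ, g u.1.1 :=
        (sum_image (f := fun u => g u.1.1) (pathPoint_pair_injective n).injOn).symm
    _ ≤ ∑ u ∈ (Q ×ˢ Q) ×ˢ I, g u.1.1 :=
        sum_le_sum_of_subset_of_nonneg (image_subset_iff.mpr hmaps) fun _ _ _ => hg _
    _ = ((r : ℝ) + 1) ^ (d + 1) * ∑ z ∈ Q, g z := by
        simp only [sum_product, sum_const, card_cube, Int.card_Icc_add_natCast, nsmul_eq_mul,
          Q, I, mul_sum]
        refine sum_congr rfl fun _ _ => ?_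
        push_cast
        ring

end Paths

section Averages

variable {d : ℕ}

noncomputable def taylorAverage (m : ℕ) (f : (Fin d → ℤ) → ℝ) (x : Fin d → ℤ) (ℓ r : ℕ) : ℝ :=
  𝔼 y ∈ cube (subcubeCorner x ℓ r) r, discreteTaylor m f x y

noncomputable def topOrderNorm (m ℓ : ℕ) (f : (Fin d → ℤ) → ℝ) : ℝ :=
  ∑ γ ∈ (multiIndicesLE d (m + 1)).filter (fun γ => ∑ i, γ i = m + 1), boxNorm ℓ (fdMulti γ f)

theorem taylorAverage_zero {m ℓ : ℕ} (f : (Fin d → ℤ) → ℝ) {x : Fin d → ℤ}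
    (hx : x ∈ cube 0 ℓ) : taylorAverage m f x ℓ 0 = f x := by
  rw [taylorAverage, subcube_zero hx, expect_singleton, discreteTaylor_self]

theorem sum_boxNorm_fdMulti_update_le (m ℓ : ℕ) (f : (Fin d → ℤ) → ℝ) (n : Fin d) :
    ∑ γ ∈ (multiIndicesLE d m).filter (· n = 0),
        boxNorm ℓ (fdMulti (Function.update γ n (m + 1 - ∑ i, γ i)) f) ≤
      topOrderNorm m ℓ f := by
  classical
  set up := fun γ : Fin d → ℕ => Function.update γ n (m + 1 - ∑ i, γ i)
  have hinj : Set.InjOn up ↑((multiIndicesLE d m).filter (· n = 0)) := by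
    intro γ hγ δ hδ h
    simp only [coe_filter, Set.mem_ofPred_eq] at hγ hδ
    funext j
    rcases eq_or_ne j n with rfl | hj
    · rw [hγ.2, hδ.2]
    · simpa [up, hj] using congrFun h j
  rw [← sum_image (f := fun γ => boxNorm ℓ (fdMulti γ f)) hinj]
  refine sum_le_sum_of_subset_of_nonneg ?_ fun _ _ _ => Real.sqrt_nonneg _
  intro β hβ
  obtain ⟨γ, hγ, rfl⟩ := mem_image.mp hβ
  obtain ⟨hγm, hγn⟩ := mem_filter.mp hγ
  have hsum : ∑ i, up γ i = m + 1 := by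
    rw [sum_update_of_eq_zero hγn]; have := mem_multiIndicesLE.mp hγm; omega
  exact mem_filter.mpr ⟨mem_multiIndicesLE.mpr hsum.le, hsum⟩

theorem sum_sum_abs_fdMulti_update_le {m ℓ : ℕ} (f : (Fin d → ℤ) → ℝ)
    {Q : Finset (Fin d → ℤ)} (hQ : Q ⊆ cube 0 ℓ) :
    ∑ n, ∑ z ∈ Q, ∑ γ ∈ (multiIndicesLE d m).filter (· n = 0),
        |fdMulti (Function.update γ n (m + 1 - ∑ i, γ i)) f z| ≤
      d * (√(#Q) * topOrderNorm m ℓ f) := by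
  refine (sum_le_sum fun n _ => ?_).trans_eq
    (by rw [sum_const, card_univ, Fintype.card_fin, nsmul_eq_mul])
  rw [sum_comm]
  calc ∑ γ ∈ (multiIndicesLE d m).filter (· n = 0), ∑ z ∈ Q,
        |fdMulti (Function.update γ n (m + 1 - ∑ i, γ i)) f z|
      ≤ ∑ γ ∈ (multiIndicesLE d m).filter (· n = 0),
        √(#Q) * boxNorm ℓ (fdMulti (Function.update γ n (m + 1 - ∑ i, γ i)) f) := by
        refine sum_le_sum fun γ _ => (sum_abs_le_sqrt_card_mul_sqrt Q _).trans ?_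
        exact mul_le_mul_of_nonneg_left (Real.sqrt_le_sqrt
          (sum_le_sum_of_subset_of_nonneg hQ fun _ _ _ => sq_nonneg _)) (Real.sqrt_nonneg _)
    _ ≤ √(#Q) * topOrderNorm m ℓ f := by
        rw [← mul_sum]
        gcongr
        exact sum_boxNorm_fdMulti_update_le m ℓ f n

theorem abs_expect_discreteTaylor_sub_le (m : ℕ) (f : (Fin d → ℤ) → ℝ) {a x : Fin d → ℤ}
    {r : ℕ} (hx : x ∈ cube a r) {Q' : Finset (Fin d → ℤ)} (hQ' : Q' ⊆ cube a r)
    (hQ'ne : Q'.Nonempty) :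
    |𝔼 y ∈ cube a r, discreteTaylor m f x y - 𝔼 y' ∈ Q', discreteTaylor m f x y'| ≤
      (#(cube a r) * #Q' : ℝ)⁻¹ * ((((m : ℝ) + 1) * (r + 1)) ^ m * ((r : ℝ) + 1) ^ (d + 1) *
        ∑ n, ∑ z ∈ cube a r, ∑ γ ∈ (multiIndicesLE d m).filter (· n = 0),
          |fdMulti (Function.update γ n (m + 1 - ∑ i, γ i)) f z|) := by
  set Q := cube a r
  set h : Fin d → (Fin d → ℤ) → ℝ := fun n z => ∑ γ ∈ (multiIndicesLE d m).filter (· n = 0),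
    |fdMulti (Function.update γ n (m + 1 - ∑ i, γ i)) f z|
  set C := (((m : ℝ) + 1) * (r + 1)) ^ m
  refine (abs_expect_sub_expect_le (cube_nonempty a r) hQ'ne _ _).trans ?_
  gcongr
  have hpoint : ∀ y ∈ Q, ∀ y' ∈ Q', |discreteTaylor m f x y - discreteTaylor m f x y'| ≤
      ∑ n, ∑ s ∈ Icc (a n) (a n + r), C * h n (pathPoint n y y' s) := by
    intro y hy y' hy'
    refine (abs_sub_le_sum_pathPoint _ hy (hQ' hy')).trans
      (sum_le_sum fun n _ => sum_le_sum fun s hs => ?_)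
    have hp := mem_cube.mp (pathPoint_mem_cube hy (hQ' hy') hs)
    refine abs_discreteTaylor_add_single_sub_le f (fun i => ?_) n
    have := mem_cube.mp hx i
    have := hp i
    rw [abs_le]
    constructor <;> linarith
  calc ∑ y ∈ Q, ∑ y' ∈ Q', |discreteTaylor m f x y - discreteTaylor m f x y'|
      ≤ ∑ y ∈ Q, ∑ y' ∈ Q', ∑ n, ∑ s ∈ Icc (a n) (a n + r), C * h n (pathPoint n y y' s) :=
        sum_le_sum fun y hy => sum_le_sum fun y' hy' => hpoint y hy y' hy'
    _ = C * ∑ n, ∑ y ∈ Q, ∑ y' ∈ Q', ∑ s ∈ Icc (a n) (a n + r), h n (pathPoint n y y' s) := by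
        simp only [← mul_sum]
        rw [sum_congr rfl fun y _ => sum_comm, sum_comm]
    _ ≤ C * ∑ n, ((r : ℝ) + 1) ^ (d + 1) * ∑ z ∈ Q, h n z := by
        gcongr with n
        exact sum_pathPoint_le hQ' n fun z => sum_nonneg fun _ _ => abs_nonneg _
    _ = C * ((r : ℝ) + 1) ^ (d + 1) * ∑ n, ∑ z ∈ Q, h n z := by rw [← mul_sum, mul_assoc]

theorem abs_taylorAverage_sub_le {m ℓ r r' : ℕ} (f : (Fin d → ℤ) → ℝ) {x : Fin d → ℤ}
    (hx : x ∈ cube 0 ℓ) (hr' : r' ≤ r) (hr : r ≤ ℓ) (hrr' : r + 1 ≤ 2 * (r' + 1)) :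
    |taylorAverage m f x ℓ r - taylorAverage m f x ℓ r'| ≤
      d * 2 ^ d * ((m : ℝ) + 1) ^ m * ((r : ℝ) + 1) ^ ((m : ℝ) + 1 - d / 2) *
        topOrderNorm m ℓ f := by
  set s : ℝ := r + 1
  set s' : ℝ := r' + 1
  set T := topOrderNorm m ℓ f
  set u := √(s ^ d)
  have hs : 0 < s := by positivity
  have hu : 0 < u := Real.sqrt_pos.mpr (by positivity)
  have huu : u * u = s ^ d := Real.mul_self_sqrt (by positivity)
  have hss' : s ^ d ≤ 2 ^ d * s' ^ d := by
    rw [← mul_pow]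
    exact pow_le_pow_left₀ hs.le (by simp only [s, s']; exact_mod_cast hrr') d
  have hT : 0 ≤ T := sum_nonneg fun _ _ => Real.sqrt_nonneg _
  have hcard : ∀ ρ : ℕ, (#(cube (subcubeCorner x ℓ ρ) ρ) : ℝ) = ((ρ : ℝ) + 1) ^ d := by
    intro ρ; rw [card_cube]; push_cast; ring
  have hsum := sum_sum_abs_fdMulti_update_le (m := m) f (subcube_subset hx hr)
  rw [hcard] at hsum
  refine (abs_expect_discreteTaylor_sub_le m f (mem_subcube_self hx) (subcube_mono hr')
    (cube_nonempty _ _)).trans ?_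
  have hexp : s ^ ((m : ℝ) + 1 - d / 2) = s ^ (m + 1) / u := by
    rw [pow_div_sqrt_pow_eq_rpow hs]; push_cast; ring_nf
  rw [hcard, hcard, hexp]
  calc (s ^ d * s' ^ d)⁻¹ * (((m + 1) * s) ^ m * s ^ (d + 1) * _)
      ≤ (s ^ d * s' ^ d)⁻¹ * (((m + 1) * s) ^ m * s ^ (d + 1) * (d * (u * T))) := by gcongr
    _ = (d * (m + 1) ^ m * s ^ (m + 1) * T) * (u / s' ^ d) := by
        rw [mul_pow]
        field_simp
        ring
    _ ≤ (d * (m + 1) ^ m * s ^ (m + 1) * T) * (2 ^ d / u) := by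
        refine mul_le_mul_of_nonneg_left ?_ (by positivity)
        rw [div_le_div_iff₀ (by positivity) hu]
        linarith
    _ = d * 2 ^ d * ((m : ℝ) + 1) ^ m * (s ^ (m + 1) / u) * T := by ring

end Averages

section Sobolev

variable {d : ℕ}

theorem abs_discreteTaylor_le {m ℓ : ℕ} (hℓ : 1 ≤ ℓ) (f : (Fin d → ℤ) → ℝ) {x y : Fin d → ℤ}
    (hxy : ∀ i, |x i - y i| ≤ ℓ) :
    |discreteTaylor m f x y| ≤
      ((m : ℝ) + 1) ^ m * ∑ γ ∈ multiIndicesLE d m, (ℓ : ℝ) ^ (∑ i, γ i) * |fdMulti γ f y| := by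
  rw [discreteTaylor, mul_sum]
  refine (abs_sum_le_sum_abs _ _).trans (sum_le_sum fun γ hγ => ?_)
  have hm := mem_multiIndicesLE.mp hγ
  have hℓ' : (1 : ℝ) ≤ ℓ := by exact_mod_cast hℓ
  rw [abs_mul, ← mul_assoc]
  gcongr
  calc |multiBinom (x - y) γ| ≤ ((ℓ : ℝ) + m) ^ ∑ i, γ i := abs_multiBinom_le hxy hm
    _ ≤ (((m : ℝ) + 1) * ℓ) ^ ∑ i, γ i := by
        gcongr
        nlinarith [(m.cast_nonneg : (0 : ℝ) ≤ m)]
    _ ≤ ((m : ℝ) + 1) ^ m * (ℓ : ℝ) ^ ∑ i, γ i := by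
        rw [mul_pow]
        gcongr
        linarith [(m.cast_nonneg : (0 : ℝ) ≤ m)]

theorem rpow_neg_half_eq_inv_sqrt {s : ℝ} (hs : 0 < s) (d : ℕ) :
    s ^ (-(d : ℝ) / 2) = (√(s ^ d))⁻¹ := by
  have h := pow_div_sqrt_pow_eq_rpow hs 0 d
  rw [pow_zero, one_div, Nat.cast_zero, zero_sub] at h
  rw [neg_div, ← h]

theorem expect_abs_le_rpow_mul_boxNorm {ℓ : ℕ} (hℓ : 1 ≤ ℓ) (g : (Fin d → ℤ) → ℝ) :
    𝔼 z ∈ cube 0 ℓ, |g z| ≤ (ℓ : ℝ) ^ (-(d : ℝ) / 2) * boxNorm ℓ g := by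
  set B := cube (0 : Fin d → ℤ) ℓ
  have hℓ' : (0 : ℝ) < ℓ := by exact_mod_cast hℓ
  have hB : (0 : ℝ) < #B := by exact_mod_cast (cube_nonempty 0 ℓ).card_pos
  have hvv : √(#B : ℝ) * √(#B : ℝ) = #B := Real.mul_self_sqrt hB.le
  have huv : √((ℓ : ℝ) ^ d) ≤ √(#B : ℝ) := by
    refine Real.sqrt_le_sqrt ?_
    rw [card_cube]
    push_cast
    gcongr
    linarith
  rw [expect_eq_sum_div_card, div_le_iff₀ hB, rpow_neg_half_eq_inv_sqrt hℓ']
  refine (sum_abs_le_sqrt_card_mul_sqrt B g).trans ?_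
  have hN : 0 ≤ boxNorm ℓ g := Real.sqrt_nonneg _
  rw [show √(∑ z ∈ B, g z ^ 2) = boxNorm ℓ g from rfl]
  calc √(#B : ℝ) * boxNorm ℓ g
      = (√((ℓ : ℝ) ^ d))⁻¹ * (√((ℓ : ℝ) ^ d) * √(#B : ℝ)) * boxNorm ℓ g := by
        field_simp
    _ ≤ (√((ℓ : ℝ) ^ d))⁻¹ * (√(#B : ℝ) * √(#B : ℝ)) * boxNorm ℓ g := by gcongr
    _ = _ := by rw [hvv]; ring

theorem abs_taylorAverage_self_le {m ℓ : ℕ} (hℓ : 1 ≤ ℓ) (f : (Fin d → ℤ) → ℝ)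
    {x : Fin d → ℤ} (hx : x ∈ cube 0 ℓ) :
    |taylorAverage m f x ℓ ℓ| ≤ ((m : ℝ) + 1) ^ m * (ℓ : ℝ) ^ (-(d : ℝ) / 2) *
      ∑ γ ∈ multiIndicesLE d m, (ℓ : ℝ) ^ (∑ i, γ i) * boxNorm ℓ (fdMulti γ f) := by
  have hdist : ∀ y ∈ cube 0 ℓ, ∀ i, |x i - y i| ≤ ℓ := by
    intro y hy i
    have := mem_cube.mp hx i
    have := mem_cube.mp hy i
    simp only [Pi.zero_apply, zero_add] at *
    rw [abs_le]
    constructor <;> linarith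
  rw [taylorAverage, subcube_self hx]
  calc |𝔼 y ∈ cube 0 ℓ, discreteTaylor m f x y|
      ≤ 𝔼 y ∈ cube 0 ℓ, ((m : ℝ) + 1) ^ m *
          ∑ γ ∈ multiIndicesLE d m, (ℓ : ℝ) ^ (∑ i, γ i) * |fdMulti γ f y| :=
        (abs_expect_le _ _).trans
          (expect_le_expect fun y hy => abs_discreteTaylor_le hℓ f (hdist y hy))
    _ = ((m : ℝ) + 1) ^ m * ∑ γ ∈ multiIndicesLE d m,
          (ℓ : ℝ) ^ (∑ i, γ i) * 𝔼 y ∈ cube 0 ℓ, |fdMulti γ f y| := by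
        rw [← mul_expect, expect_sum_comm]
        simp only [mul_expect]
    _ ≤ ((m : ℝ) + 1) ^ m * ∑ γ ∈ multiIndicesLE d m,
          (ℓ : ℝ) ^ (∑ i, γ i) * ((ℓ : ℝ) ^ (-(d : ℝ) / 2) * boxNorm ℓ (fdMulti γ f)) := by
        gcongr
        exact expect_abs_le_rpow_mul_boxNorm hℓ _
    _ = _ := by
        rw [mul_assoc, mul_sum _ _ ((ℓ : ℝ) ^ (-(d : ℝ) / 2))]
        exact congrArg _ (sum_congr rfl fun _ _ => by ring)

theorem abs_taylorAverage_dyadic_step_le {m ℓ : ℕ} (hd : d ≤ 2 * m + 2)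
    (f : (Fin d → ℤ) → ℝ) {x : Fin d → ℤ} (hx : x ∈ cube 0 ℓ) (j : ℕ) :
    |taylorAverage m f x ℓ (ℓ / 2 ^ (j + 1)) - taylorAverage m f x ℓ (ℓ / 2 ^ j)| ≤
      d * 2 ^ d * ((m : ℝ) + 1) ^ m * (2 * ℓ : ℝ) ^ ((m : ℝ) + 1 - d / 2) *
        ((2 ^ ((m : ℝ) + 1 - d / 2))⁻¹) ^ j * topOrderNorm m ℓ f := by
  set κ : ℝ := (m : ℝ) + 1 - d / 2
  set r := ℓ / 2 ^ j
  have hκ : 0 ≤ κ := by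
    have : (d : ℝ) ≤ 2 * m + 2 := by exact_mod_cast hd
    simp only [κ]; linarith
  have hT : 0 ≤ topOrderNorm m ℓ f := sum_nonneg fun _ _ => Real.sqrt_nonneg _
  have hr' : ℓ / 2 ^ (j + 1) = r / 2 := by rw [pow_succ, Nat.div_div_eq_div_mul]
  rw [hr']
  rcases Nat.eq_zero_or_pos r with hr0 | hr0
  · rw [hr0, Nat.zero_div, sub_self, abs_zero]
    positivity
  rw [abs_sub_comm]
  refine (abs_taylorAverage_sub_le f hx (Nat.div_le_self r 2) (Nat.div_le_self ℓ _)
    (by omega)).trans ?_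
  have hr : ((r : ℝ) + 1) ^ κ ≤ (2 * ℓ : ℝ) ^ κ * ((2 ^ κ)⁻¹) ^ j := by
    have hrℓ : (r : ℝ) ≤ ℓ / 2 ^ j := by
      simpa only [r, Nat.cast_pow, Nat.cast_ofNat] using Nat.cast_div_le (m := ℓ) (n := 2 ^ j)
    have hr1 : (1 : ℝ) ≤ r := by exact_mod_cast hr0
    calc ((r : ℝ) + 1) ^ κ ≤ (2 * ℓ / 2 ^ j : ℝ) ^ κ := by
          refine Real.rpow_le_rpow (by positivity) ?_ hκ
          rw [mul_div_assoc]
          linarith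
      _ = (2 * ℓ : ℝ) ^ κ * ((2 ^ κ)⁻¹) ^ j := by
          rw [Real.div_rpow (by positivity) (by positivity), ← Real.rpow_pow_comm zero_le_two,
            inv_pow, div_eq_mul_inv]
  calc _ = d * 2 ^ d * ((m : ℝ) + 1) ^ m * topOrderNorm m ℓ f * ((r : ℝ) + 1) ^ κ := by ring
    _ ≤ d * 2 ^ d * ((m : ℝ) + 1) ^ m * topOrderNorm m ℓ f *
          ((2 * ℓ : ℝ) ^ κ * ((2 ^ κ)⁻¹) ^ j) := by gcongr
    _ = _ := by ring

theorem exists_abs_sub_taylorAverage_le {m : ℕ} (hd : d ≤ 2 * m + 1) :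
    ∃ K : ℝ, 0 ≤ K ∧ ∀ (ℓ : ℕ) (f : (Fin d → ℤ) → ℝ), ∀ x ∈ cube 0 ℓ,
      |f x - taylorAverage m f x ℓ ℓ| ≤
        K * (ℓ : ℝ) ^ ((m : ℝ) + 1 - d / 2) * topOrderNorm m ℓ f := by
  set κ : ℝ := (m : ℝ) + 1 - d / 2
  set q : ℝ := (2 ^ κ)⁻¹
  have hκ : 0 < κ := by
    have : (d : ℝ) ≤ 2 * m + 1 := by exact_mod_cast hd
    simp only [κ]; linarith
  have hq0 : 0 ≤ q := by positivity
  have hq1 : q < 1 := inv_lt_one_of_one_lt₀ (Real.one_lt_rpow one_lt_two hκ)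
  refine ⟨d * 2 ^ d * ((m : ℝ) + 1) ^ m * 2 ^ κ / (1 - q),
    div_nonneg (by positivity) (sub_nonneg.mpr hq1.le), fun ℓ f x hx => ?_⟩
  set C : ℝ := d * 2 ^ d * ((m : ℝ) + 1) ^ m * (2 * ℓ : ℝ) ^ κ * topOrderNorm m ℓ f
  have hT : 0 ≤ topOrderNorm m ℓ f := sum_nonneg fun _ _ => Real.sqrt_nonneg _
  have htele : f x - taylorAverage m f x ℓ ℓ = ∑ j ∈ range ℓ,
      (taylorAverage m f x ℓ (ℓ / 2 ^ (j + 1)) - taylorAverage m f x ℓ (ℓ / 2 ^ j)) := by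
    rw [sum_range_sub (fun j => taylorAverage m f x ℓ (ℓ / 2 ^ j)),
      Nat.div_eq_of_lt Nat.lt_two_pow_self, taylorAverage_zero f hx, pow_zero, Nat.div_one]
  rw [htele]
  calc _ ≤ ∑ j ∈ range ℓ, C * q ^ j := by
        refine (abs_sum_le_sum_abs _ _).trans (sum_le_sum fun j _ => ?_)
        refine (abs_taylorAverage_dyadic_step_le (by omega) f hx j).trans_eq ?_
        ring
    _ ≤ C * (1 / (1 - q)) := by
        rw [← mul_sum, range_eq_Ico]
        gcongr
        simpa using geom_sum_Ico_le_of_lt_one hq0 hq1 (m := 0) (n := ℓ)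
    _ = _ := by
        simp only [C]
        rw [Real.mul_rpow zero_le_two (Nat.cast_nonneg ℓ)]
        ring

theorem exists_abs_le_sobolevSum {m : ℕ} (hd : d ≤ 2 * m + 1) :
    ∃ S : ℝ, 0 < S ∧ ∀ ℓ : ℕ, 1 ≤ ℓ → ∀ (f : (Fin d → ℤ) → ℝ), ∀ x ∈ cube 0 ℓ,
      |f x| ≤ S * (ℓ : ℝ) ^ (-(d : ℝ) / 2) *
        ∑ γ ∈ multiIndicesLE d (m + 1), (ℓ : ℝ) ^ (∑ i, γ i) * boxNorm ℓ (fdMulti γ f) := by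
  obtain ⟨K, hK, hdyadic⟩ := exists_abs_sub_taylorAverage_le hd
  refine ⟨((m : ℝ) + 1) ^ m + K, by positivity, fun ℓ hℓ f x hx => ?_⟩
  set Ξ := ∑ γ ∈ multiIndicesLE d (m + 1), (ℓ : ℝ) ^ (∑ i, γ i) * boxNorm ℓ (fdMulti γ f)
  have hℓ' : (0 : ℝ) < ℓ := by exact_mod_cast hℓ
  have hterm : ∀ γ : Fin d → ℕ, 0 ≤ (ℓ : ℝ) ^ (∑ i, γ i) * boxNorm ℓ (fdMulti γ f) :=
    fun γ => mul_nonneg (by positivity) (Real.sqrt_nonneg _)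
  have hlow : ∑ γ ∈ multiIndicesLE d m, (ℓ : ℝ) ^ (∑ i, γ i) * boxNorm ℓ (fdMulti γ f) ≤ Ξ :=
    sum_le_sum_of_subset_of_nonneg
      (fun γ hγ => mem_multiIndicesLE.mpr ((mem_multiIndicesLE.mp hγ).trans (Nat.le_succ m)))
      fun γ _ _ => hterm γ
  have htop : (ℓ : ℝ) ^ ((m : ℝ) + 1 - d / 2) * topOrderNorm m ℓ f ≤
      (ℓ : ℝ) ^ (-(d : ℝ) / 2) * Ξ := by
    have hsplit : (ℓ : ℝ) ^ ((m : ℝ) + 1 - d / 2) = (ℓ : ℝ) ^ (-(d : ℝ) / 2) * ℓ ^ (m + 1) := by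
      rw [← Real.rpow_natCast, ← Real.rpow_add hℓ']
      push_cast
      ring_nf
    rw [hsplit, mul_assoc]
    gcongr
    rw [topOrderNorm, mul_sum]
    refine (sum_le_sum fun γ hγ => ?_).trans (sum_le_sum_of_subset_of_nonneg
      (filter_subset _ _) fun γ _ _ => hterm γ)
    rw [(mem_filter.mp hγ).2]
  calc |f x| ≤ |taylorAverage m f x ℓ ℓ| + |f x - taylorAverage m f x ℓ ℓ| := by
        simpa using abs_add_le (taylorAverage m f x ℓ ℓ) (f x - taylorAverage m f x ℓ ℓ)
    _ ≤ _ := add_le_add (abs_taylorAverage_self_le hℓ f hx) (hdyadic ℓ f x hx)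
    _ ≤ ((m : ℝ) + 1) ^ m * (ℓ : ℝ) ^ (-(d : ℝ) / 2) * Ξ +
          K * ((ℓ : ℝ) ^ (-(d : ℝ) / 2) * Ξ) := by
        rw [mul_assoc K]
        gcongr
    _ = _ := by ring

end Sobolev

theorem stmt14_general (d : ℕ) :
    ∃ S : ℝ, 0 < S ∧ ∀ ℓ : ℕ, 1 ≤ ℓ → ∀ f : (Fin d → ℤ) → ℝ,
      ∀ x ∈ Finset.Icc (0 : Fin d → ℤ) (fun _ => (ℓ : ℤ)),
        |f x| ≤ S * (ℓ : ℝ) ^ (-(d : ℝ) / 2) *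
          ∑ α ∈ (Finset.Iic (fun _ : Fin d => d / 2 + 1)).filter
              (fun α => ∑ i, α i ≤ d / 2 + 1),
            Real.sqrt (∑ y ∈ Finset.Icc (0 : Fin d → ℤ) (fun _ => (ℓ : ℤ)),
              (ℓ : ℝ) ^ (2 * ∑ i, α i) * (fdMulti α f y) ^ 2) := by
  obtain ⟨S, hS, hsobolev⟩ := exists_abs_le_sobolevSum (d := d) (m := d / 2) (by omega)
  refine ⟨S, hS, fun ℓ hℓ f x hx => ?_⟩
  have hbox : Icc (0 : Fin d → ℤ) (fun _ => (ℓ : ℤ)) = cube 0 ℓ := by simp [cube]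
  have hterm : ∀ α : Fin d → ℕ,
      √(∑ y ∈ cube 0 ℓ, (ℓ : ℝ) ^ (2 * ∑ i, α i) * fdMulti α f y ^ 2) =
        (ℓ : ℝ) ^ (∑ i, α i) * boxNorm ℓ (fdMulti α f) := fun α => by
    rw [← mul_sum, Real.sqrt_mul (by positivity), pow_mul', Real.sqrt_sq (by positivity), boxNorm]
  rw [hbox] at hx ⊢
  simp only [hterm]
  exact hsobolev ℓ hℓ f x hx

/-- Discrete Sobolev inequality: there is `S(d) > 0` such that for every `ℓ ≥ 1` and
`f : ℤ^d → ℝ`, with `B_ℓ = {0,…,ℓ}^d` and `M' = ⌊d/2⌋ + 1`,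
`max_{x ∈ B_ℓ} |f(x)| ≤ S(d) ℓ^{−d/2} ∑_{|α| ≤ M'} (∑_{x ∈ B_ℓ} ℓ^{2|α|} |∇^α f(x)|²)^{1/2}`. -/
theorem stmt14 (d : ℕ) (hd : 1 ≤ d) :
    ∃ S : ℝ, 0 < S ∧ ∀ ℓ : ℕ, 1 ≤ ℓ → ∀ f : (Fin d → ℤ) → ℝ,
      ∀ x ∈ Finset.Icc (0 : Fin d → ℤ) (fun _ => (ℓ : ℤ)),
        |f x| ≤ S * (ℓ : ℝ) ^ (-(d : ℝ) / 2) *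
          ∑ α ∈ (Finset.Iic (fun _ : Fin d => d / 2 + 1)).filter
              (fun α => ∑ i, α i ≤ d / 2 + 1),
            Real.sqrt (∑ y ∈ Finset.Icc (0 : Fin d → ℤ) (fun _ => (ℓ : ℤ)),
              (ℓ : ℝ) ^ (2 * ∑ i, α i) * (fdMulti α f y) ^ 2) :=
  stmt14_general d
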